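/- Value range of the maximum of mesas: Let ℓ = 1/N for some positive integer N, let Γ > 0, and let G = {0, ℓ, 2ℓ, …, 1−ℓ, 1}². Suppose that for every p ∈ G we are given A^p = (a_c^p, a_r^p, a_t^p, a_l^p, a_b^p) ∈ [0.4, 0.6]⁵ and g^p ∈ [−0.01, 0.01]². Then for all x ∈ [0,1]²: max_{p ∈ G} M(x; p, A^p, g^p) ∈ [1/3, 2/3]. -/
import Mathlib


noncomputable section

/-- The central affine piece of a mesa. -/
def Pc (p : ℝ × ℝ) (a : ℝ) (g : ℝ × ℝ) (x : ℝ × ℝ) : ℝ :=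
  (x.1 - p.1) * g.1 + (x.2 - p.2) * g.2 + a

/-- The right affine piece of a mesa. -/
def Pr (ℓ Γ : ℝ) (p : ℝ × ℝ) (a : ℝ) (g : ℝ × ℝ) (x : ℝ × ℝ) : ℝ :=
  (x.1 - p.1) * (-Γ + g.1) + (x.2 - p.2) * g.2 + a + Γ * ℓ / 2

/-- The top affine piece of a mesa. -/
def Pt (ℓ Γ : ℝ) (p : ℝ × ℝ) (a : ℝ) (g : ℝ × ℝ) (x : ℝ × ℝ) : ℝ :=
  (x.1 - p.1) * g.1 + (x.2 - p.2) * (-Γ + g.2) + a + Γ * ℓ / 2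

/-- The left affine piece of a mesa. -/
def Pl (ℓ Γ : ℝ) (p : ℝ × ℝ) (a : ℝ) (g : ℝ × ℝ) (x : ℝ × ℝ) : ℝ :=
  (x.1 - p.1) * (Γ + g.1) + (x.2 - p.2) * g.2 + a + Γ * ℓ / 2

/-- The bottom affine piece of a mesa. -/
def Pb (ℓ Γ : ℝ) (p : ℝ × ℝ) (a : ℝ) (g : ℝ × ℝ) (x : ℝ × ℝ) : ℝ :=
  (x.1 - p.1) * g.1 + (x.2 - p.2) * (Γ + g.2) + a + Γ * ℓ / 2

/-- The mesa function with center `p`, values `A` (indexed `0 = c, 1 = r, 2 = t, 3 = l, 4 = b`)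
and gradient `g`: the minimum of the five affine pieces. -/
def mesa (ℓ Γ : ℝ) (p : ℝ × ℝ) (A : Fin 5 → ℝ) (g : ℝ × ℝ) (x : ℝ × ℝ) : ℝ :=
  min (Pc p (A 0) g x)
    (min (Pr ℓ Γ p (A 1) g x) (min (Pt ℓ Γ p (A 2) g x) (min (Pl ℓ Γ p (A 3) g x) (Pb ℓ Γ p (A 4) g x))))

/-- The index set of the grid `{0, ℓ, 2ℓ, …, 1}²` where `ℓ = 1/N`. -/
def grid (N : ℕ) : Finset (ℕ × ℕ) := Finset.range (N + 1) ×ˢ Finset.range (N + 1)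

/-- The grid point corresponding to an index pair. -/
def pt (ℓ : ℝ) (k : ℕ × ℕ) : ℝ × ℝ := ((k.1 : ℝ) * ℓ, (k.2 : ℝ) * ℓ)

set_option maxHeartbeats 1000000

lemma dist_aux {y kk L Nr : ℝ} (hL : 0 < L) (hNL : Nr * L = 1)
    (hle : kk ≤ y * Nr + 1/2) (hgt : y * Nr + 1/2 < kk + 1) :
    -(L/2) ≤ y - kk * L ∧ y - kk * L ≤ L/2 := by
  have e : y * Nr * L = y := by rw [mul_assoc, hNL, mul_one]
  have h1 := mul_le_mul_of_nonneg_right hle hL.le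
  have h2 := mul_le_mul_of_nonneg_right hgt.le hL.le
  constructor <;> nlinarith

lemma mul_bound_aux {u v c : ℝ} (hul : -1 ≤ u) (huu : u ≤ 1) (hvl : -c ≤ v) (hvu : v ≤ c) :
    -c ≤ u * v ∧ u * v ≤ c := by constructor <;> nlinarith

theorem grid_nonempty (N : ℕ) : (grid N).Nonempty :=
  ⟨(0, 0), by simp [grid]⟩

lemma mesa_lower (ℓ Γ : ℝ) (hℓ0 : 0 < ℓ) (hℓ1 : ℓ ≤ 1) (hΓ : 0 < Γ)
    (p : ℝ × ℝ) (A : Fin 5 → ℝ) (gg : ℝ × ℝ) (x : ℝ × ℝ)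
    (ha : ∀ i, (2/5 : ℝ) ≤ A i)
    (hg1l : -(1/100 : ℝ) ≤ gg.1) (hg1u : gg.1 ≤ 1/100)
    (hg2l : -(1/100 : ℝ) ≤ gg.2) (hg2u : gg.2 ≤ 1/100)
    (hd1l : -(ℓ/2) ≤ x.1 - p.1) (hd1u : x.1 - p.1 ≤ ℓ/2)
    (hd2l : -(ℓ/2) ≤ x.2 - p.2) (hd2u : x.2 - p.2 ≤ ℓ/2) :
    (1/3 : ℝ) ≤ mesa ℓ Γ p A gg x := by
  have ha0 := ha 0; have ha1 := ha 1; have ha2 := ha 2; have ha3 := ha 3; have ha4 := ha 4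
  unfold mesa Pc Pr Pt Pl Pb
  obtain ⟨hb1l, hb1u⟩ := mul_bound_aux (u := x.1 - p.1) (by linarith) (by linarith) hg1l hg1u
  obtain ⟨hb2l, hb2u⟩ := mul_bound_aux (u := x.2 - p.2) (by linarith) (by linarith) hg2l hg2u
  have hΓ1 : (0:ℝ) ≤ Γ * (ℓ/2 - (x.1 - p.1)) := mul_nonneg hΓ.le (by linarith)
  have hΓ1' : (0:ℝ) ≤ Γ * (ℓ/2 + (x.1 - p.1)) := mul_nonneg hΓ.le (by linarith)
  have hΓ2 : (0:ℝ) ≤ Γ * (ℓ/2 - (x.2 - p.2)) := mul_nonneg hΓ.le (by linarith)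
  have hΓ2' : (0:ℝ) ≤ Γ * (ℓ/2 + (x.2 - p.2)) := mul_nonneg hΓ.le (by linarith)
  refine le_min ?_ (le_min ?_ (le_min ?_ (le_min ?_ ?_)))
  · linarith
  · linarith [hΓ1]
  · linarith [hΓ2]
  · linarith [hΓ1']
  · linarith [hΓ2']

lemma mesa_upper (ℓ Γ : ℝ) (p : ℝ × ℝ) (A : Fin 5 → ℝ) (gg : ℝ × ℝ) (x : ℝ × ℝ)
    (ha : A 0 ≤ (3/5 : ℝ))
    (hg1l : -(1/100 : ℝ) ≤ gg.1) (hg1u : gg.1 ≤ 1/100)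
    (hg2l : -(1/100 : ℝ) ≤ gg.2) (hg2u : gg.2 ≤ 1/100)
    (hd1l : -(1:ℝ) ≤ x.1 - p.1) (hd1u : x.1 - p.1 ≤ 1)
    (hd2l : -(1:ℝ) ≤ x.2 - p.2) (hd2u : x.2 - p.2 ≤ 1) :
    mesa ℓ Γ p A gg x ≤ (2/3 : ℝ) := by
  refine le_trans (min_le_left _ _) ?_
  unfold Pc
  obtain ⟨hb1l, hb1u⟩ := mul_bound_aux (u := x.1 - p.1) hd1l hd1u hg1l hg1u
  obtain ⟨hb2l, hb2u⟩ := mul_bound_aux (u := x.2 - p.2) hd2l hd2u hg2l hg2u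
  linarith

/-- Value range of the maximum of mesas: it always lies in `[1/3, 2/3]`. -/
theorem mesa_max_value (N : ℕ) (hN : 0 < N) (ℓ : ℝ) (hℓ : ℓ = 1 / N) (Γ : ℝ) (hΓ : 0 < Γ)
    (A : ℕ × ℕ → Fin 5 → ℝ) (hA : ∀ k ∈ grid N, ∀ i, A k i ∈ Set.Icc (0.4 : ℝ) 0.6)
    (g : ℕ × ℕ → ℝ × ℝ)
    (hg : ∀ k ∈ grid N, (g k).1 ∈ Set.Icc (-0.01 : ℝ) 0.01 ∧ (g k).2 ∈ Set.Icc (-0.01 : ℝ) 0.01)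
    (x : ℝ × ℝ) (hx : x.1 ∈ Set.Icc (0 : ℝ) 1 ∧ x.2 ∈ Set.Icc (0 : ℝ) 1) :
    ((grid N).sup' (grid_nonempty N) fun k => mesa ℓ Γ (pt ℓ k) (A k) (g k) x)
      ∈ Set.Icc (1 / 3 : ℝ) (2 / 3) := by
  have hN0 : (0:ℝ) < N := by exact_mod_cast hN
  have hℓ0 : (0:ℝ) < ℓ := by rw [hℓ]; positivity
  have hNℓ : (N:ℝ) * ℓ = 1 := by rw [hℓ]; field_simp
  have hℓ1 : ℓ ≤ 1 := by
    rw [hℓ]; rw [div_le_one hN0]; exact_mod_cast hN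
  obtain ⟨⟨hx10, hx11⟩, ⟨hx20, hx21⟩⟩ := hx
  have hgnorm : ∀ k ∈ grid N, -(1/100 : ℝ) ≤ (g k).1 ∧ (g k).1 ≤ 1/100 ∧
      -(1/100 : ℝ) ≤ (g k).2 ∧ (g k).2 ≤ 1/100 := by
    intro k hk
    obtain ⟨⟨h1, h2⟩, ⟨h3, h4⟩⟩ := hg k hk
    norm_num at h1 h2 h3 h4 ⊢
    exact ⟨h1, h2, h3, h4⟩
  constructor
  · -- lower bound
    have h1nn : (0:ℝ) ≤ x.1 * N + 1/2 := by positivity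
    have h2nn : (0:ℝ) ≤ x.2 * N + 1/2 := by positivity
    set k : ℕ × ℕ := (⌊x.1 * N + 1/2⌋₊, ⌊x.2 * N + 1/2⌋₊) with hk
    have hk1le : (k.1 : ℝ) ≤ x.1 * N + 1/2 := Nat.floor_le h1nn
    have hk2le : (k.2 : ℝ) ≤ x.2 * N + 1/2 := Nat.floor_le h2nn
    have hk1gt : x.1 * N + 1/2 < (k.1 : ℝ) + 1 := Nat.lt_floor_add_one _
    have hk2gt : x.2 * N + 1/2 < (k.2 : ℝ) + 1 := Nat.lt_floor_add_one _
    have hkmem : k ∈ grid N := by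
      simp only [grid, Finset.mem_product, Finset.mem_range]
      constructor
      · have hb := mul_le_mul_of_nonneg_right hx11 hN0.le
        rw [one_mul] at hb
        have h : (k.1 : ℝ) < (N:ℝ) + 1 := by linarith
        exact_mod_cast h
      · have hb := mul_le_mul_of_nonneg_right hx21 hN0.le
        rw [one_mul] at hb
        have h : (k.2 : ℝ) < (N:ℝ) + 1 := by linarith
        exact_mod_cast h
    clear hk
    clear_value k
    obtain ⟨hd1l, hd1u⟩ := dist_aux hℓ0 hNℓ hk1le hk1gt
    obtain ⟨hd2l, hd2u⟩ := dist_aux hℓ0 hNℓ hk2le hk2gt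
    obtain ⟨hg1l, hg1u, hg2l, hg2u⟩ := hgnorm k hkmem
    have ha : ∀ i, (2/5 : ℝ) ≤ A k i := by
      intro i
      have := (hA k hkmem i).1
      norm_num at this ⊢
      linarith
    refine le_trans ?_ (Finset.le_sup' _ hkmem)
    exact mesa_lower ℓ Γ hℓ0 hℓ1 hΓ (pt ℓ k) (A k) (g k) x ha hg1l hg1u hg2l hg2u
      hd1l hd1u hd2l hd2u
  · -- upper bound
    apply Finset.sup'_le
    intro k hk
    have hk' := hk
    simp only [grid, Finset.mem_product, Finset.mem_range, Nat.lt_succ_iff] at hk'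
    obtain ⟨hk1, hk2⟩ := hk'
    have hp1 : (0:ℝ) ≤ (k.1:ℝ) * ℓ ∧ (k.1:ℝ) * ℓ ≤ 1 := by
      refine ⟨by positivity, ?_⟩
      have h : (k.1:ℝ) ≤ N := by exact_mod_cast hk1
      calc (k.1:ℝ) * ℓ ≤ (N:ℝ) * ℓ := mul_le_mul_of_nonneg_right h hℓ0.le
        _ = 1 := hNℓ
    have hp2 : (0:ℝ) ≤ (k.2:ℝ) * ℓ ∧ (k.2:ℝ) * ℓ ≤ 1 := by
      refine ⟨by positivity, ?_⟩
      have h : (k.2:ℝ) ≤ N := by exact_mod_cast hk2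
      calc (k.2:ℝ) * ℓ ≤ (N:ℝ) * ℓ := mul_le_mul_of_nonneg_right h hℓ0.le
        _ = 1 := hNℓ
    obtain ⟨hg1l, hg1u, hg2l, hg2u⟩ := hgnorm k hk
    have ha : A k 0 ≤ (3/5 : ℝ) := by
      have := (hA k hk 0).2
      norm_num at this ⊢
      linarith
    refine mesa_upper ℓ Γ (pt ℓ k) (A k) (g k) x ha hg1l hg1u hg2l hg2u ?_ ?_ ?_ ?_ <;>
      simp only [pt] <;> [linarith [hp1.2]; linarith [hp1.1]; linarith [hp2.2]; linarith [hp2.1]]
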